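/- In the group Γ_{2k-1}, the element [x,y] lies in the intersection of all finite terms of the lower central series (the ω-term (Γ_{2k-1})_ω), and moreover (Γ_{2k-1})_ω equals the central cyclic subgroup of order (2k-1)² generated by [x,y], while (Γ_{2k-1})_{ω+1} = [Γ_{2k-1}, (Γ_{2k-1})_ω] is trivial. -/

import Mathlib

open scoped commutatorElement

inductive Gen : Type
  | x | y | t

open FreeGroup in
/-- Relations of `Γ_m = ⟨x, y, t | [x,y]^(m²), [[x,y],x], [[x,y],y],
t x t⁻¹ = x⁻¹, t y t⁻¹ = y⁻¹⟩` (with `m = 2k-1`). -/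
def gammaRelsM (m : ℕ) : Set (FreeGroup Gen) :=
  { ⁅of Gen.x, of Gen.y⁆ ^ (m ^ 2),
    ⁅⁅of Gen.x, of Gen.y⁆, of Gen.x⁆,
    ⁅⁅of Gen.x, of Gen.y⁆, of Gen.y⁆,
    of Gen.t * of Gen.x * (of Gen.t)⁻¹ * of Gen.x,
    of Gen.t * of Gen.y * (of Gen.t)⁻¹ * of Gen.y }

/-- The group `Γ_{2k-1}`. -/
abbrev GammaM (m : ℕ) := PresentedGroup (gammaRelsM m)

/-- The image of the commutator `⁅x,y⁆` in `Γ_m`. -/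
def cM (m : ℕ) : GammaM m :=
  ⁅PresentedGroup.of (rels := gammaRelsM m) Gen.x,
   PresentedGroup.of (rels := gammaRelsM m) Gen.y⁆

/-!
Since `t` inverts `x`, `x ^ 2 ^ (q + 1) = ⁅x ^ 2 ^ q, t⁆`, so `x ^ 2 ^ q` lies in the `q`-th term
of the lower central series (indexed from `0`) and `⁅x, y⁆ ^ 2 ^ q = ⁅x ^ 2 ^ q, y⁆` in the next
one; as `⁅x, y⁆` has odd order, it lies in every finite term.

Conversely, `Γ_m` maps to an explicit model of words `y ^ b * x ^ a * ⁅x, y⁆ ^ c * t ^ d`.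
If `g` has `t`-degree `d = 0`, the coordinates `(a, b)` of `⁅g, h⁆` are `0` or `2` times those of
`g`, so the `(q + 1)`-st term of the model has `d = 0` and `2 ^ q ∣ a, b`: the `ω`-term of the
model lies on the central line. The model with its central coordinate forgotten maps back onto
`Γ_m ⧸ ⟨⁅x, y⁆⟩`, whence `Γ_ω ≤ ⟨⁅x, y⁆⟩`. The central line of the model also shows that
`⁅x, y⁆` has order exactly `m²`.
-/

section GroupLemmas

variable {G : Type*} [Group G]

lemma commutatorElement_inv_inv_of_commute {x y : G} (hx : Commute x ⁅x, y⁆)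
    (hy : Commute y ⁅x, y⁆) : ⁅x⁻¹, y⁻¹⁆ = ⁅x, y⁆ := by
  rw [commutatorElement_inv_left, commutatorElement_inv_left, hy.inv_mul_cancel,
    hx.inv_mul_cancel]

lemma commutatorElement_pow_left {x y : G} (hx : Commute x ⁅x, y⁆) (k : ℕ) :
    ⁅x ^ k, y⁆ = ⁅x, y⁆ ^ k := by
  induction k with
  | zero => simp
  | succ k ih =>
    rw [pow_succ', commutatorElement_mul_left_eq_conj_mul, ih, (hx.pow_right k).mul_inv_cancel,
      pow_succ]

lemma pow_two_pow_mem_lowerCentralSeries {t a : G} (h : t * a * t⁻¹ = a⁻¹) (q : ℕ) :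
    a ^ 2 ^ q ∈ (⊤ : Subgroup G).lowerCentralSeries q := by
  induction q with
  | zero => exact Subgroup.mem_top _
  | succ q ih =>
    have hconj : t * (a ^ 2 ^ q)⁻¹ * t⁻¹ = a ^ 2 ^ q := by
      rw [← inv_pow, ← conj_pow, ← conj_inv, h, inv_inv]
    have hcomm : a ^ 2 ^ (q + 1) = ⁅a ^ 2 ^ q, t⁆ := by
      rw [commutatorElement_def, mul_assoc, mul_assoc, ← mul_assoc t, hconj, pow_succ, pow_mul,
        sq]
    rw [hcomm]
    exact Subgroup.commutator_mem_commutator ih (Subgroup.mem_top t)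

lemma zpow_mul_mul_inv_of_conj_eq_inv {t a : G} (h : t * a * t⁻¹ = a⁻¹) (d : ℤ) :
    t ^ d * a * (t ^ d)⁻¹ = a ^ (d.negOnePow : ℤ) := by
  have h' : t⁻¹ * a * t = a⁻¹ :=
    calc t⁻¹ * a * t = t⁻¹ * a⁻¹⁻¹ * t := by rw [inv_inv]
      _ = t⁻¹ * (t * a * t⁻¹)⁻¹ * t := by rw [h]
      _ = a⁻¹ := by group
  induction d using Int.induction_on with
  | zero => simp
  | succ d ih =>
    calc t ^ ((d : ℤ) + 1) * a * (t ^ ((d : ℤ) + 1))⁻¹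
        = t ^ (d : ℤ) * (t * a * t⁻¹) * (t ^ (d : ℤ))⁻¹ := by group
      _ = (t ^ (d : ℤ) * a * (t ^ (d : ℤ))⁻¹)⁻¹ := by rw [h]; group
      _ = a ^ (((d : ℤ) + 1).negOnePow : ℤ) := by
        rw [ih, Int.negOnePow_succ, Units.val_neg, zpow_neg]
  | pred d ih =>
    calc t ^ (-(d : ℤ) - 1) * a * (t ^ (-(d : ℤ) - 1))⁻¹
        = t ^ (-(d : ℤ)) * (t⁻¹ * a * t) * (t ^ (-(d : ℤ)))⁻¹ := by group
      _ = (t ^ (-(d : ℤ)) * a * (t ^ (-(d : ℤ)))⁻¹)⁻¹ := by rw [h']; group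
      _ = a ^ ((-(d : ℤ) - 1).negOnePow : ℤ) := by
        rw [ih, Int.negOnePow_sub, Int.negOnePow_one, mul_neg_one, Units.val_neg, zpow_neg]

lemma Subgroup.mem_of_pow_mem_of_coprime {H : Subgroup G} {g : G} {k : ℕ}
    (hk : k.Coprime (orderOf g)) (hg : g ^ k ∈ H) : g ∈ H := by
  obtain ⟨j, hj⟩ := exists_pow_eq_self_of_coprime hk
  exact hj ▸ H.pow_mem hg j

lemma Subgroup.normal_zpowers_of_mem_center {g : G}
    (hg : g ∈ Subgroup.center G) : (Subgroup.zpowers g).Normal where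
  conj_mem n hn h := by
    rw [Subgroup.mem_center_iff.mp (Subgroup.zpowers_le.mpr hg hn) h, mul_inv_cancel_right]
    exact hn

lemma MonoidHom.map_mem_iInf_lowerCentralSeries {K : Type*} [Group K] (f : G →* K)
    {g : G} (hg : g ∈ ⨅ q : ℕ, (⊤ : Subgroup G).lowerCentralSeries q) :
    f g ∈ ⨅ q : ℕ, (⊤ : Subgroup K).lowerCentralSeries q := by
  rw [Subgroup.mem_iInf] at hg ⊢
  intro q
  have hfg := Subgroup.mem_map_of_mem f (hg q)
  rw [Subgroup.map_lowerCentralSeries] at hfg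
  exact Subgroup.lowerCentralSeries_mono q le_top hfg

end GroupLemmas

lemma Int.eq_zero_of_forall_pow_dvd {p z : ℤ} (hp : p.natAbs ≠ 1) (h : ∀ q : ℕ, p ^ q ∣ z) :
    z = 0 := by
  by_contra hz
  obtain ⟨q, hq⟩ := Int.finiteMultiplicity_iff.mpr ⟨hp, hz⟩
  exact hq (h _)

/-- `⟨a, b, c, d⟩` stands for `y ^ b * x ^ a * ⁅x, y⁆ ^ c * t ^ d`, multiplied as the relations of
`Γ_m` dictate when `n = m ^ 2`; the sign `d.negOnePow` records that `t` inverts `x` and `y`. -/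
@[ext] structure GammaModel (n : ℕ) where
  a : ℤ
  b : ℤ
  c : ZMod n
  d : ℤ

namespace GammaModel

variable {n : ℕ}

instance : Mul (GammaModel n) where
  mul g h := ⟨g.a + g.d.negOnePow * h.a, g.b + g.d.negOnePow * h.b,
    g.c + h.c + ((g.a * g.d.negOnePow * h.b : ℤ) : ZMod n), g.d + h.d⟩

instance : One (GammaModel n) := ⟨⟨0, 0, 0, 0⟩⟩

instance : Inv (GammaModel n) where
  inv g := ⟨-(g.d.negOnePow * g.a), -(g.d.negOnePow * g.b), ((g.a * g.b : ℤ) : ZMod n) - g.c,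
    -g.d⟩

@[simp] lemma mul_a (g h : GammaModel n) : (g * h).a = g.a + g.d.negOnePow * h.a := rfl
@[simp] lemma mul_b (g h : GammaModel n) : (g * h).b = g.b + g.d.negOnePow * h.b := rfl
@[simp] lemma mul_c (g h : GammaModel n) :
    (g * h).c = g.c + h.c + ((g.a * g.d.negOnePow * h.b : ℤ) : ZMod n) := rfl
@[simp] lemma mul_d (g h : GammaModel n) : (g * h).d = g.d + h.d := rfl
@[simp] lemma one_a : (1 : GammaModel n).a = 0 := rfl
@[simp] lemma one_b : (1 : GammaModel n).b = 0 := rfl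
@[simp] lemma one_c : (1 : GammaModel n).c = 0 := rfl
@[simp] lemma one_d : (1 : GammaModel n).d = 0 := rfl
@[simp] lemma inv_a (g : GammaModel n) : g⁻¹.a = -(g.d.negOnePow * g.a) := rfl
@[simp] lemma inv_b (g : GammaModel n) : g⁻¹.b = -(g.d.negOnePow * g.b) := rfl
@[simp] lemma inv_c (g : GammaModel n) : g⁻¹.c = ((g.a * g.b : ℤ) : ZMod n) - g.c := rfl
@[simp] lemma inv_d (g : GammaModel n) : g⁻¹.d = -g.d := rfl

instance : Group (GammaModel n) where
  mul_assoc g h k := by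
    rcases Int.units_eq_one_or g.d.negOnePow with hg | hg <;>
      ext <;> simp only [mul_a, mul_b, mul_c, mul_d, Int.negOnePow_add, Units.val_mul, hg,
        Units.val_neg, Units.val_one, Int.cast_mul, Int.cast_add, Int.cast_neg, Int.cast_one] <;>
      ring
  one_mul g := by ext <;> simp
  mul_one g := by ext <;> simp
  inv_mul_cancel g := by
    rcases Int.units_eq_one_or g.d.negOnePow with hg | hg <;>
      ext <;> simp [hg]

def central : Multiplicative (ZMod n) →* GammaModel n where
  toFun γ := ⟨0, 0, γ.toAdd, 0⟩
  map_one' := rfl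
  map_mul' _ _ := by ext <;> simp

lemma central_injective : Function.Injective (central (n := n)) :=
  fun _ _ h => congrArg (fun g : GammaModel n => g.c) h

lemma commute_central (γ : Multiplicative (ZMod n)) (g : GammaModel n) :
    Commute (central γ) g := by
  ext <;> simp [central, add_comm]

lemma orderOf_central_ofAdd_one : orderOf (central (.ofAdd (1 : ZMod n))) = n := by
  rw [orderOf_injective _ central_injective, orderOf_ofAdd_eq_addOrderOf, ZMod.addOrderOf_one]

lemma commutatorElement_d (g h : GammaModel n) : ⁅g, h⁆.d = 0 := by
  simp [commutatorElement_def]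

lemma commutatorElement_a_of_d_eq_zero {g : GammaModel n} (hg : g.d = 0) (h : GammaModel n) :
    ⁅g, h⁆.a = (1 - h.d.negOnePow) * g.a := by
  rcases Int.units_eq_one_or h.d.negOnePow with hh | hh <;>
    simp only [commutatorElement_def, mul_a, inv_a, mul_d, inv_d, hg, Int.negOnePow_add,
      Int.negOnePow_neg, Int.negOnePow_zero, hh, Units.val_mul, Units.val_neg, Units.val_one] <;>
    ring

lemma commutatorElement_b_of_d_eq_zero {g : GammaModel n} (hg : g.d = 0) (h : GammaModel n) :
    ⁅g, h⁆.b = (1 - h.d.negOnePow) * g.b := by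
  rcases Int.units_eq_one_or h.d.negOnePow with hh | hh <;>
    simp only [commutatorElement_def, mul_b, inv_b, mul_d, inv_d, hg, Int.negOnePow_add,
      Int.negOnePow_neg, Int.negOnePow_zero, hh, Units.val_mul, Units.val_neg, Units.val_one] <;>
    ring

def dyadic (q : ℕ) : Subgroup (GammaModel n) where
  carrier := {g | g.d = 0 ∧ (2 : ℤ) ^ q ∣ g.a ∧ (2 : ℤ) ^ q ∣ g.b}
  one_mem' := by simp
  mul_mem' := by
    rintro g h ⟨hgd, hga, hgb⟩ ⟨hhd, hha, hhb⟩
    simp_all [dvd_add]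
  inv_mem' := by
    rintro g ⟨hgd, hga, hgb⟩
    simp_all

lemma commutatorElement_mem_dyadic_succ {q : ℕ} {g : GammaModel n} (hg : g ∈ dyadic q)
    (h : GammaModel n) : ⁅g, h⁆ ∈ dyadic (q + 1) := by
  obtain ⟨hgd, hga, hgb⟩ := hg
  have two_dvd : (2 : ℤ) ∣ 1 - h.d.negOnePow := by
    rcases Int.units_eq_one_or h.d.negOnePow with hh | hh <;> simp [hh]
  refine ⟨commutatorElement_d g h, ?_, ?_⟩
  · rw [commutatorElement_a_of_d_eq_zero hgd, pow_succ']
    exact mul_dvd_mul two_dvd hga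
  · rw [commutatorElement_b_of_d_eq_zero hgd, pow_succ']
    exact mul_dvd_mul two_dvd hgb

lemma lowerCentralSeries_succ_le_dyadic (q : ℕ) :
    (⊤ : Subgroup (GammaModel n)).lowerCentralSeries (q + 1) ≤ dyadic q := by
  rw [Subgroup.lowerCentralSeries_succ, Subgroup.commutator_le]
  induction q with
  | zero => exact fun g _ h _ => ⟨commutatorElement_d g h, by simp, by simp⟩
  | succ q ih =>
    exact fun g hg h _ => commutatorElement_mem_dyadic_succ
      ((Subgroup.commutator_le.mpr ih) hg) h

lemma exists_eq_central_of_mem_iInf {g : GammaModel n}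
    (hg : g ∈ ⨅ q : ℕ, (⊤ : Subgroup (GammaModel n)).lowerCentralSeries q) :
    ∃ γ, g = central γ := by
  have hdy (q : ℕ) : g ∈ dyadic q :=
    lowerCentralSeries_succ_le_dyadic q (Subgroup.mem_iInf.mp hg (q + 1))
  refine ⟨.ofAdd g.c, ?_⟩
  ext
  · exact Int.eq_zero_of_forall_pow_dvd (by decide) fun q => (hdy q).2.1
  · exact Int.eq_zero_of_forall_pow_dvd (by decide) fun q => (hdy q).2.2
  · rfl
  · exact (hdy 0).1

def gen : Gen → GammaModel n
  | .x => ⟨1, 0, 0, 0⟩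
  | .y => ⟨0, 1, 0, 0⟩
  | .t => ⟨0, 0, 0, 1⟩

lemma commutatorElement_gen_x_gen_y :
    ⁅(gen .x : GammaModel n), gen .y⁆ = central (.ofAdd (1 : ZMod n)) := by
  ext <;> simp [gen, central, commutatorElement_def]

lemma gen_relations {m : ℕ} : ∀ r ∈ gammaRelsM m, FreeGroup.lift (gen (n := m ^ 2)) r = 1 := by
  simp only [gammaRelsM, Set.mem_insert_iff, Set.mem_singleton_iff, forall_eq_or_imp, forall_eq,
    map_pow, map_commutatorElement, map_mul, map_inv, FreeGroup.lift_apply_of,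
    commutatorElement_gen_x_gen_y, commutatorElement_eq_one_iff_commute]
  refine ⟨?_, commute_central _ _, commute_central _ _, ?_, ?_⟩
  · rw [← map_pow, ← ofAdd_nsmul, nsmul_one, ZMod.natCast_self, ofAdd_zero, map_one]
  all_goals ext <;> simp [gen]

variable {Q : Type*} [Group Q] {X Y T : Q}

def liftOfCommute (hXY : Commute X Y) (hX : T * X * T⁻¹ = X⁻¹) (hY : T * Y * T⁻¹ = Y⁻¹) :
    GammaModel n →* Q where
  toFun g := Y ^ g.b * X ^ g.a * T ^ g.d
  map_one' := by simp
  map_mul' g h := by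
    have swap (Z : Q) (hZ : T * Z * T⁻¹ = Z⁻¹) (k : ℤ) :
        T ^ g.d * Z ^ k = Z ^ (g.d.negOnePow * k : ℤ) * T ^ g.d := by
      rw [zpow_mul, ← zpow_mul_mul_inv_of_conj_eq_inv hZ, conj_zpow, inv_mul_cancel_right]
    simp only [mul_a, mul_b, mul_d, zpow_add]
    symm
    calc Y ^ g.b * X ^ g.a * T ^ g.d * (Y ^ h.b * X ^ h.a * T ^ h.d)
        = Y ^ g.b * X ^ g.a * (T ^ g.d * Y ^ h.b) * X ^ h.a * T ^ h.d := by group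
      _ = Y ^ g.b * (X ^ g.a * Y ^ (g.d.negOnePow * h.b : ℤ)) * (T ^ g.d * X ^ h.a) * T ^ h.d := by
        rw [swap Y hY]; group
      _ = _ := by
        rw [swap X hX, (hXY.zpow_zpow _ _).eq]
        group

@[simp] lemma liftOfCommute_apply (hXY : Commute X Y) (hX : T * X * T⁻¹ = X⁻¹)
    (hY : T * Y * T⁻¹ = Y⁻¹) (g : GammaModel n) :
    liftOfCommute hXY hX hY g = Y ^ g.b * X ^ g.a * T ^ g.d := rfl

end GammaModel

section Gamma

variable (m : ℕ)

def xM : GammaM m := PresentedGroup.of Gen.x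
def yM : GammaM m := PresentedGroup.of Gen.y
def tM : GammaM m := PresentedGroup.of Gen.t

lemma cM_eq_commutatorElement : cM m = ⁅xM m, yM m⁆ := rfl

lemma gammaM_relations : cM m ^ m ^ 2 = 1 ∧ ⁅cM m, xM m⁆ = 1 ∧ ⁅cM m, yM m⁆ = 1 ∧
    tM m * xM m * (tM m)⁻¹ * xM m = 1 ∧ tM m * yM m * (tM m)⁻¹ * yM m = 1 := by
  have h (r) (hr : r ∈ gammaRelsM m) := PresentedGroup.one_of_mem hr
  simp only [gammaRelsM, Set.mem_insert_iff, Set.mem_singleton_iff, forall_eq_or_imp, forall_eq]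
    at h
  exact h

lemma cM_pow_sq : cM m ^ m ^ 2 = 1 := (gammaM_relations m).1

lemma commute_xM_cM : Commute (xM m) (cM m) :=
  (commutatorElement_eq_one_iff_commute.mp (gammaM_relations m).2.1).symm

lemma commute_yM_cM : Commute (yM m) (cM m) :=
  (commutatorElement_eq_one_iff_commute.mp (gammaM_relations m).2.2.1).symm

lemma tM_conj_xM : tM m * xM m * (tM m)⁻¹ = (xM m)⁻¹ :=
  mul_eq_one_iff_eq_inv.mp (gammaM_relations m).2.2.2.1

lemma tM_conj_yM : tM m * yM m * (tM m)⁻¹ = (yM m)⁻¹ :=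
  mul_eq_one_iff_eq_inv.mp (gammaM_relations m).2.2.2.2

lemma commute_tM_cM : Commute (tM m) (cM m) := by
  have hconj : tM m * cM m * (tM m)⁻¹ = cM m := by
    rw [cM_eq_commutatorElement, ← MulAut.conj_apply, map_commutatorElement, MulAut.conj_apply,
      MulAut.conj_apply, tM_conj_xM, tM_conj_yM,
      commutatorElement_inv_inv_of_commute (x := xM m) (y := yM m) (commute_xM_cM m)
        (commute_yM_cM m)]
  rwa [mul_inv_eq_iff_eq_mul] at hconj

lemma cM_mem_center : cM m ∈ Subgroup.center (GammaM m) := by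
  rw [Subgroup.center_eq_iInf (PresentedGroup.closure_range_of _)]
  simp only [Subgroup.mem_iInf, Subgroup.mem_centralizer_singleton_iff]
  rintro _ ⟨_ | _ | _, rfl⟩
  exacts [(commute_xM_cM m).symm.eq, (commute_yM_cM m).symm.eq, (commute_tM_cM m).symm.eq]

def toModel : GammaM m →* GammaModel (m ^ 2) := PresentedGroup.toGroup GammaModel.gen_relations

lemma toModel_cM : toModel m (cM m) = GammaModel.central (.ofAdd 1) := by
  rw [cM_eq_commutatorElement, map_commutatorElement, toModel, xM, yM, PresentedGroup.toGroup.of,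
    PresentedGroup.toGroup.of, GammaModel.commutatorElement_gen_x_gen_y]

lemma orderOf_cM : orderOf (cM m) = m ^ 2 := by
  refine Nat.dvd_antisymm (orderOf_dvd_of_pow_eq_one (cM_pow_sq m)) ?_
  have h := orderOf_map_dvd (toModel m) (cM m)
  rwa [toModel_cM, GammaModel.orderOf_central_ofAdd_one] at h

lemma cM_pow_two_pow_mem_lowerCentralSeries (q : ℕ) :
    cM m ^ 2 ^ q ∈ (⊤ : Subgroup (GammaM m)).lowerCentralSeries (q + 1) := by
  rw [cM_eq_commutatorElement, ← commutatorElement_pow_left (y := yM m) (commute_xM_cM m)]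
  exact Subgroup.commutator_mem_commutator
    (pow_two_pow_mem_lowerCentralSeries (tM_conj_xM m) q) (Subgroup.mem_top _)

lemma cM_mem_lowerCentralSeries (hm : Odd m) :
    ∀ q, cM m ∈ (⊤ : Subgroup (GammaM m)).lowerCentralSeries q
  | 0 => Subgroup.mem_top _
  | q + 1 => by
    refine Subgroup.mem_of_pow_mem_of_coprime ?_ (cM_pow_two_pow_mem_lowerCentralSeries m q)
    rw [orderOf_cM]
    exact Nat.Coprime.pow_left q (Nat.coprime_two_left.mpr hm.pow)

instance : (Subgroup.zpowers (cM m)).Normal :=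
  Subgroup.normal_zpowers_of_mem_center (cM_mem_center m)

def modelToQuotient : GammaModel (m ^ 2) →* GammaM m ⧸ Subgroup.zpowers (cM m) :=
  let π := QuotientGroup.mk' (Subgroup.zpowers (cM m))
  GammaModel.liftOfCommute (X := π (xM m)) (Y := π (yM m)) (T := π (tM m))
    (commutatorElement_eq_one_iff_commute.mp (by
      rw [← map_commutatorElement, ← cM_eq_commutatorElement, QuotientGroup.mk'_apply,
        QuotientGroup.eq_one_iff]
      exact Subgroup.mem_zpowers _))
    (by rw [← map_inv, ← map_mul, ← map_mul, tM_conj_xM, map_inv])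
    (by rw [← map_inv, ← map_mul, ← map_mul, tM_conj_yM, map_inv])

lemma modelToQuotient_comp_toModel :
    (modelToQuotient m).comp (toModel m) = QuotientGroup.mk' (Subgroup.zpowers (cM m)) := by
  refine PresentedGroup.ext fun g => ?_
  cases g <;> simp [modelToQuotient, toModel, GammaModel.gen, xM, yM, tM]

lemma iInf_lowerCentralSeries_le_zpowers_cM :
    ⨅ q : ℕ, (⊤ : Subgroup (GammaM m)).lowerCentralSeries q ≤ Subgroup.zpowers (cM m) := by
  intro g hg
  obtain ⟨γ, hγ⟩ :=
    GammaModel.exists_eq_central_of_mem_iInf ((toModel m).map_mem_iInf_lowerCentralSeries hg)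
  rw [← QuotientGroup.eq_one_iff, ← QuotientGroup.mk'_apply, ← modelToQuotient_comp_toModel,
    MonoidHom.comp_apply, hγ, modelToQuotient, GammaModel.liftOfCommute_apply]
  simp [GammaModel.central]

end Gamma

/-- In `Γ_{2k-1}`, the element `⁅x,y⁆` lies in the `ω`-term `⋂ₙ Gₙ` of the lower
central series; moreover the `ω`-term equals the central cyclic subgroup of order
`(2k-1)²` generated by `⁅x,y⁆`, and the `(ω+1)`-term `[G, G_ω]` is trivial. -/
theorem stmt_6 (k : ℕ) (hk : 1 ≤ k) :
    cM (2 * k - 1) ∈ (⨅ n : ℕ, (⊤ : Subgroup (GammaM (2 * k - 1))).lowerCentralSeries n) ∧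
    (⨅ n : ℕ, (⊤ : Subgroup (GammaM (2 * k - 1))).lowerCentralSeries n) =
      Subgroup.zpowers (cM (2 * k - 1)) ∧
    cM (2 * k - 1) ∈ Subgroup.center (GammaM (2 * k - 1)) ∧
    orderOf (cM (2 * k - 1)) = (2 * k - 1) ^ 2 ∧
    ⁅(⊤ : Subgroup (GammaM (2 * k - 1))), Subgroup.zpowers (cM (2 * k - 1))⁆ = ⊥ := by
  have hodd : Odd (2 * k - 1) := ⟨k - 1, by omega⟩
  have hω := Subgroup.mem_iInf.mpr (cM_mem_lowerCentralSeries _ hodd)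
  refine ⟨hω, le_antisymm (iInf_lowerCentralSeries_le_zpowers_cM _) (Subgroup.zpowers_le.mpr hω),
    cM_mem_center _, orderOf_cM _, ?_⟩
  rw [Subgroup.commutator_comm, Subgroup.commutator_eq_bot_iff_le_centralizer]
  exact (Subgroup.zpowers_le.mpr (cM_mem_center _)).trans (Subgroup.center_le_centralizer _)
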